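/- Avez's formula: let R be an algebraic curvature tensor on an n-dimensional real inner product space (V,g) with n ≥ 4. Then the second Gauss–Bonnet curvature satisfies h_4 = c⁴R²/4! = |R|² − |cR|² + (1/4)·(c²R)². -/

import Mathlib

/-!
Double forms on an `n`-dimensional real inner product space `(V, g)`, represented
by their components with respect to a (fixed) orthonormal basis: a `(p,q)`-double
form is determined by its values on pairs of increasingly ordered tuples of
distinct basis vectors, i.e. by a function `Finset (Fin n) → Finset (Fin n) → ℝ`
(supported on pairs of sets of cardinalities `p` and `q`).
-/

open Finset

noncomputable section

abbrev DF (n : ℕ) := Finset (Fin n) → Finset (Fin n) → ℝ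

namespace DF

variable {n : ℕ}

/-- The sign of the shuffle placing the increasing enumeration of `A` before that of
`B` and reordering increasingly. -/
def shuffleSign (A B : Finset (Fin n)) : ℝ :=
  (-1 : ℝ) ^ ∑ a ∈ A, (B.filter fun b => b < a).card

/-- The exterior product of double forms (Kulkarni–Nomizu type product), in components. -/
def mul (ω θ : DF n) : DF n := fun S T =>
  ∑ A ∈ S.powerset, ∑ C ∈ T.powerset,
    shuffleSign A (S \ A) * shuffleSign C (T \ C) * ω A C * θ (S \ A) (T \ C)

/-- The `(0,0)`-double form `1`. -/
def one (n : ℕ) : DF n := fun S T => if S = ∅ ∧ T = ∅ then 1 else 0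

/-- Powers `ω^k` of a double form with respect to the exterior product. -/
def pow (ω : DF n) : ℕ → DF n
  | 0 => one n
  | k + 1 => mul (pow ω k) ω

/-- The contraction `c ω`, obtained by summing, over an orthonormal basis, the
insertion of the basis vector as first argument in both slots. -/
def contr (ω : DF n) : DF n := fun S T =>
  ∑ i : Fin n,
    if i ∈ S ∨ i ∈ T then 0
    else shuffleSign {i} S * shuffleSign {i} T * ω (insert i S) (insert i T)

/-- The iterated contraction `c^r`. -/
def contrN (r : ℕ) (ω : DF n) : DF n := contr^[r] ω

/-- The metric `g` as a `(1,1)`-double form (components in an orthonormal basis). -/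
def gm (n : ℕ) : DF n := fun S T => if S = T ∧ S.card = 1 then 1 else 0

/-- The inner product of double forms induced by `g`. -/
def dinner (ω θ : DF n) : ℝ :=
  ∑ S : Finset (Fin n), ∑ T : Finset (Fin n), ω S T * θ S T

/-- The scalar given by a `(0,0)`-double form. -/
def toScalar (ω : DF n) : ℝ := ω ∅ ∅

open scoped Classical in
/-- `σ_k` of a `(1,1)`-double form: the `k`-th elementary symmetric function of the
eigenvalues of the corresponding self-adjoint endomorphism (whose matrix in the
orthonormal basis is the matrix of components). -/
def sigma (k : ℕ) (ω : DF n) : ℝ :=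
  if h : (Matrix.of fun i j => ω {i} {j} : Matrix (Fin n) (Fin n) ℝ).IsHermitian then
    ∑ s ∈ Finset.powersetCard k (Finset.univ : Finset (Fin n)), ∏ i ∈ s, h.eigenvalues i
  else 0

/-- `ω` is a `(p,p)`-double form: its components are supported in bidegree `(p,p)`. -/
def IsDeg (p : ℕ) (ω : DF n) : Prop := ∀ S T, ω S T ≠ 0 → S.card = p ∧ T.card = p

/-- Symmetry of a double form: `ω(a;b) = ω(b;a)`. -/
def IsSymm (ω : DF n) : Prop := ∀ S T, ω S T = ω T S

/-- The first Bianchi identity for a `(p,p)`-double form (in components): the complete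
antisymmetrization over the first `p+1` vector arguments vanishes. -/
def FirstBianchi (p : ℕ) (ω : DF n) : Prop :=
  ∀ U T : Finset (Fin n), U.card = p + 1 → T.card = p - 1 →
    ∑ i ∈ U,
      (if i ∈ T then 0
       else shuffleSign {i} (U.erase i) * shuffleSign {i} T * ω (U.erase i) (insert i T)) = 0

end DF

section Geometry

variable {n : ℕ} {V : Type*} [NormedAddCommGroup V] [InnerProductSpace ℝ V]

/-- The components, in the orthonormal basis `e`, of a `(p,p)`-double form given as a
function of `p + p` vector arguments. -/
def ofForm (e : OrthonormalBasis (Fin n) ℝ V) (p : ℕ)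
    (ω : (Fin p → V) → (Fin p → V) → ℝ) : DF n := fun S T =>
  if h : S.card = p ∧ T.card = p then
    ω (fun i => e ((S.orderIsoOfFin h.1 i : Fin n)))
      (fun i => e ((T.orderIsoOfFin h.2 i : Fin n)))
  else 0

/-- The components of a bilinear form, viewed as a `(1,1)`-double form. -/
def ofBilin (e : OrthonormalBasis (Fin n) ℝ V) (b : V → V → ℝ) : DF n :=
  ofForm e 1 fun x y => b (x 0) (y 0)

/-- The components of a `(2,2)`-double form given as a function of four vectors. -/
def ofCurv (e : OrthonormalBasis (Fin n) ℝ V) (R : V → V → V → V → ℝ) : DF n :=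
  ofForm e 2 fun x y => R (x 0) (x 1) (y 0) (y 1)

/-- Bilinearity of a real-valued function of two vector arguments. -/
def IsBilin (b : V → V → ℝ) : Prop :=
  (∀ (c : ℝ) (x x' y : V), b (c • x + x') y = c * b x y + b x' y) ∧
  (∀ (c : ℝ) (x y y' : V), b x (c • y + y') = c * b x y + b x y')

/-- Symmetry of a bilinear form. -/
def IsSymmBilin (b : V → V → ℝ) : Prop := ∀ x y, b x y = b y x

/-- An algebraic curvature tensor: a multilinear form of four vectors, antisymmetric
in the first two arguments, symmetric under exchange of the two pairs, and satisfying
the first Bianchi identity. -/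
structure IsCurv (R : V → V → V → V → ℝ) : Prop where
  linear : ∀ (c : ℝ) (x x' y z w : V), R (c • x + x') y z w = c * R x y z w + R x' y z w
  antisymm : ∀ x y z w, R x y z w = - R y x z w
  pair_symm : ∀ x y z w, R x y z w = R z w x y
  bianchi : ∀ x y z w, R x y z w + R y z x w + R z x y w = 0

/-- Multilinearity of a real-valued function of `p` vector arguments. -/
def IsMultilinear (p : ℕ) (f : (Fin p → V) → ℝ) : Prop :=
  ∀ (x : Fin p → V) (i : Fin p) (c : ℝ) (u v : V),
    f (Function.update x i (c • u + v)) =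
      c * f (Function.update x i u) + f (Function.update x i v)

/-- A function of `p` vector arguments is alternating. -/
def IsAlt (p : ℕ) (f : (Fin p → V) → ℝ) : Prop :=
  ∀ (x : Fin p → V) (i j : Fin p), i ≠ j → x i = x j → f x = 0

/-- A `(p,p)`-double form, as a function of `p + p` vector arguments:
multilinear and alternating in each of the two blocks of arguments. -/
def IsDoubleForm (p : ℕ) (ω : (Fin p → V) → (Fin p → V) → ℝ) : Prop :=
  (∀ y, IsMultilinear p fun x => ω x y) ∧ (∀ y, IsAlt p fun x => ω x y) ∧
  (∀ x, IsMultilinear p fun y => ω x y) ∧ (∀ x, IsAlt p fun y => ω x y)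

/-- Symmetry of a `(p,p)`-double form: `ω(x;y) = ω(y;x)`. -/
def IsSymmForm (p : ℕ) (ω : (Fin p → V) → (Fin p → V) → ℝ) : Prop := ∀ x y, ω x y = ω y x

/-- The first Bianchi identity for a `(p,p)`-double form of vector arguments:
the complete antisymmetrization over the first `p+1` vector arguments vanishes. -/
def FirstBianchiForm (p : ℕ) (hp : 0 < p) (ω : (Fin p → V) → (Fin p → V) → ℝ) : Prop :=
  ∀ (z : Fin (p + 1) → V) (y : Fin p → V),
    ∑ σ : Equiv.Perm (Fin (p + 1)),
      ((Equiv.Perm.sign σ : ℤ) : ℝ) *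
        ω (fun i => z (σ (Fin.castSucc i))) (Function.update y ⟨0, hp⟩ (z (σ (Fin.last p)))) = 0

/-- The scalar curvature `Scal = c²R` of a `(2,2)`-double form (in components). -/
def scalDF {n : ℕ} (Rd : DF n) : ℝ := DF.toScalar (DF.contrN 2 Rd)

/-- The `2k`-th Gauss–Bonnet curvature `h_{2k} = c^{2k} R^k / (2k)!`. -/
def h2kDF {n : ℕ} (k : ℕ) (Rd : DF n) : ℝ :=
  DF.toScalar (DF.contrN (2 * k) (DF.pow Rd k)) / ((2 * k).factorial : ℝ)

/-- The second Gauss–Bonnet curvature `h₄ = c⁴ R² / 4!`. -/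
def h4DF {n : ℕ} (Rd : DF n) : ℝ :=
  DF.toScalar (DF.contrN 4 (DF.pow Rd 2)) / (Nat.factorial 4 : ℝ)

end Geometry

end

/-!
Everything is computed in the components `r i j k l = R(e i, e j, e k, e l)`. Contracting a
diagonal component `ω(S, S)` sums over the indices outside `S`, so `c⁴(R²)` is the sum over all
4-tuples of distinct indices of `R²({i,j,k,l}, {i,j,k,l})`. Expanding the exterior product, only
the splittings of `{i,j,k,l}` into two pairs contribute, which gives a quadratic expression
`gbTerm` in `r`; it vanishes as soon as two indices coincide, so the sum may run over all
4-tuples. There its terms are of three kinds, summing to `6 Scal²`, `6 Σ r²` and `-24 |Ric|²`,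
while `|R|² = (Σ r²) / 4`, `|cR|² = |Ric|²` and `c²R = Scal`.
-/

namespace DF

variable {n : ℕ}

def ltSign (a b : Fin n) : ℝ := if a < b then 1 else -1

lemma ltSign_mul_self (a b : Fin n) : ltSign a b * ltSign a b = 1 := by
  unfold ltSign; split_ifs <;> norm_num

lemma ltSign_of_lt {a b : Fin n} (h : a < b) : ltSign a b = 1 := if_pos h

lemma ltSign_sq (a b : Fin n) : ltSign a b ^ 2 = 1 := by
  rw [sq, ltSign_mul_self]

lemma ltSign_swap {a b : Fin n} (h : a ≠ b) : ltSign b a = -ltSign a b := by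
  rcases h.lt_or_gt with h | h <;> simp [ltSign, h, h.not_gt]

lemma neg_one_pow_ite_lt {a b : Fin n} (h : a ≠ b) :
    (-1 : ℝ) ^ (if b < a then 1 else 0) = ltSign a b := by
  rcases h.lt_or_gt with h | h <;> simp [ltSign, h, h.not_gt]

lemma shuffleSign_mul_self (A B : Finset (Fin n)) : shuffleSign A B * shuffleSign A B = 1 := by
  rw [shuffleSign, ← pow_add]
  exact Even.neg_one_pow ⟨_, rfl⟩

lemma shuffleSign_singleton {a b : Fin n} (h : a ≠ b) : shuffleSign {a} {b} = ltSign a b := by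
  rw [shuffleSign, sum_singleton, filter_singleton, ← neg_one_pow_ite_lt h]
  split_ifs <;> simp

lemma shuffleSign_pair {i j k l : Fin n} (hij : i ≠ j) (hik : i ≠ k) (hil : i ≠ l)
    (hjk : j ≠ k) (hjl : j ≠ l) (hkl : k ≠ l) :
    shuffleSign {i, j} {k, l} = ltSign i k * ltSign i l * (ltSign j k * ltSign j l) := by
  have hcard (a : Fin n) : (({k, l} : Finset (Fin n)).filter (· < a)).card =
      (if k < a then 1 else 0) + (if l < a then 1 else 0) := by
    rw [filter_insert, filter_singleton]
    split_ifs <;> simp [hkl]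
  rw [shuffleSign, sum_pair hij, hcard, hcard, pow_add, pow_add, pow_add, neg_one_pow_ite_lt hik,
    neg_one_pow_ite_lt hil, neg_one_pow_ite_lt hjk, neg_one_pow_ite_lt hjl]

lemma one_mul (ω : DF n) : mul (one n) ω = ω := by
  funext S T
  unfold mul one
  rw [sum_eq_single_of_mem ∅ (empty_mem_powerset S) fun A _ hA => by simp [hA],
    sum_eq_single_of_mem ∅ (empty_mem_powerset T) fun C _ hC => by simp [hC]]
  simp [shuffleSign]

lemma pow_two (ω : DF n) : pow ω 2 = mul ω ω := by
  rw [pow, pow, pow, one_mul]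

lemma contr_self_eq_sum (ω : DF n) (S : Finset (Fin n)) (f : Fin n → ℝ)
    (hf : ∀ i ∈ S, f i = 0) (hω : ∀ i ∉ S, ω (insert i S) (insert i S) = f i) :
    contr ω S S = ∑ i, f i := by
  refine sum_congr rfl fun i _ => ?_
  by_cases hi : i ∈ S
  · simp [hi, hf i hi]
  · rw [if_neg (by simpa using hi), shuffleSign_mul_self, _root_.one_mul, hω i hi]

lemma IsDeg.apply_eq_zero_of_card_left {p : ℕ} {ω : DF n} (h : IsDeg p ω) {S : Finset (Fin n)}
    (hS : S.card ≠ p) (T : Finset (Fin n)) : ω S T = 0 :=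
  by_contra fun h0 => hS (h S T h0).1

lemma IsDeg.apply_eq_zero_of_card_right {p : ℕ} {ω : DF n} (h : IsDeg p ω) (S : Finset (Fin n))
    {T : Finset (Fin n)} (hT : T.card ≠ p) : ω S T = 0 :=
  by_contra fun h0 => hT (h S T h0).2

lemma IsDeg.contr {p : ℕ} {ω : DF n} (h : IsDeg (p + 1) ω) : IsDeg p (contr ω) := by
  intro S T hST
  obtain ⟨i, -, hi⟩ := exists_ne_zero_of_sum_ne_zero hST
  have hiST : i ∉ S ∧ i ∉ T := by
    by_contra h'
    exact hi (if_pos (by tauto))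
  rw [if_neg (by tauto)] at hi
  have := h _ _ (right_ne_zero_of_mul hi)
  rw [card_insert_of_notMem hiST.1, card_insert_of_notMem hiST.2] at this
  omega

end DF

lemma two_mul_sum_eq_sum_pair {α M : Type*} [Fintype α] [DecidableEq α] [CommSemiring M]
    (f : Finset α → M) (hf : ∀ S, S.card ≠ 2 → f S = 0) :
    2 * ∑ S, f S = ∑ i, ∑ j, if i = j then 0 else f {i, j} := by
  rw [← Fintype.sum_prod_type' (f := fun i j => if i = j then 0 else f {i, j}),
    ← sum_fiberwise (g := fun p : α × α => ({p.1, p.2} : Finset α)), mul_sum]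
  refine sum_congr rfl fun S _ => ?_
  by_cases hS : S.card = 2
  · obtain ⟨a, b, hab, rfl⟩ := card_eq_two.mp hS
    have hfiber : univ.filter (fun p : α × α => ({p.1, p.2} : Finset α) = {a, b}) =
        {(a, b), (b, a)} := by
      ext ⟨x, y⟩
      simp only [mem_filter, mem_univ, true_and, mem_insert, mem_singleton, Prod.mk.injEq]
      constructor
      · intro h
        have hx : x ∈ ({a, b} : Finset α) := h ▸ mem_insert_self x {y}
        have hy : y ∈ ({a, b} : Finset α) := h ▸ by simp
        have ha : a ∈ ({x, y} : Finset α) := h ▸ mem_insert_self a {b}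
        simp only [mem_insert, mem_singleton] at hx hy ha
        grind
      · rintro (⟨rfl, rfl⟩ | ⟨rfl, rfl⟩)
        · rfl
        · exact pair_comm x y
    rw [hfiber, sum_pair (by simp [hab]), if_neg hab, if_neg hab.symm, pair_comm b a]
    ring
  · rw [hf S hS, mul_zero]
    refine (sum_eq_zero fun p hp => ?_).symm
    rw [(mem_filter.mp hp).2, hf S hS, ite_self]

lemma sum_eq_sum_singleton {α M : Type*} [Fintype α] [DecidableEq α] [AddCommMonoid M]
    (f : Finset α → M) (hf : ∀ S, S.card ≠ 1 → f S = 0) :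
    ∑ S, f S = ∑ i, f {i} := by
  rw [← sum_subset (subset_univ (powersetCard 1 univ)) fun S _ hS => hf S (by simpa using hS),
    powersetCard_one, sum_map]
  rfl

section QuadSums

variable {α : Type*} [Fintype α] (f : α → α → α → α → ℝ)

lemma sum_comm_12 : ∑ a, ∑ b, ∑ c, ∑ d, f a b c d = ∑ b, ∑ a, ∑ c, ∑ d, f a b c d :=
  sum_comm

lemma sum_comm_23 : ∑ a, ∑ b, ∑ c, ∑ d, f a b c d = ∑ a, ∑ c, ∑ b, ∑ d, f a b c d :=
  sum_congr rfl fun _ _ => sum_comm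

lemma sum_comm_34 : ∑ a, ∑ b, ∑ c, ∑ d, f a b c d = ∑ a, ∑ b, ∑ d, ∑ c, f a b c d :=
  sum_congr rfl fun _ _ => sum_congr rfl fun _ _ => sum_comm

lemma sum_rev4 : ∑ d, ∑ c, ∑ b, ∑ a, f a b c d = ∑ a, ∑ b, ∑ c, ∑ d, f a b c d := by
  rw [sum_comm_34, sum_comm_23, sum_comm_12, sum_comm_34, sum_comm_23, sum_comm_34]

lemma sum_mul_sum_inner (F G : α → α → α → ℝ) :
    ∑ i, ∑ j, ∑ k, ∑ l, F i j k * G j k l = ∑ j, ∑ k, (∑ i, F i j k) * (∑ l, G j k l) := by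
  simp only [sum_mul_sum]
  rw [sum_comm_12, sum_comm_23]

end QuadSums

namespace Components

variable {n : ℕ} (r : Fin n → Fin n → Fin n → Fin n → ℝ)

structure IsCurvSymm : Prop where
  antisymm : ∀ i j k l, r j i k l = -r i j k l
  pair_symm : ∀ i j k l, r k l i j = r i j k l

def ricci (a b : Fin n) : ℝ := ∑ m, r m a m b

def scal : ℝ := ∑ a, ricci r a a

def normSq : ℝ := ∑ i, ∑ j, ∑ k, ∑ l, r i j k l ^ 2

def ricciNormSq : ℝ := ∑ a, ∑ b, ricci r a b ^ 2

def scalTerm (i j k l : Fin n) : ℝ :=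
  r i j i j * r k l k l + r i k i k * r j l j l + r i l i l * r j k j k

def normTerm (i j k l : Fin n) : ℝ := r i j k l ^ 2 + r i k j l ^ 2 + r i l j k ^ 2

def ricciTerm (i j k l : Fin n) : ℝ :=
  r i j i k * r j l k l - r i j i l * r j k k l - r i j j k * r i l k l
    + r i j j l * r i k k l + r i k i l * r j k j l + r i k j k * r i l j l

/-- The value of `R²` on the orthonormal 4-frame `(e_i, e_j, e_k, e_l)`, written in components. -/
def gbTerm (i j k l : Fin n) : ℝ :=
  2 * scalTerm r i j k l + 2 * normTerm r i j k l - 4 * ricciTerm r i j k l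

lemma sum_apply_eq_ricci (a b : Fin n) : ∑ m, r m a m b = ricci r a b := rfl

lemma sum_scalTerm : ∑ i, ∑ j, ∑ k, ∑ l, scalTerm r i j k l = 3 * scal r ^ 2 := by
  have hscal : ∑ i, ∑ j, r i j i j = scal r := sum_comm
  have h₁ : ∑ i, ∑ j, ∑ k, ∑ l, r i j i j * r k l k l = scal r ^ 2 := by
    simp only [← mul_sum, ← sum_mul, hscal, sq]
  have h₂ : ∑ i, ∑ j, ∑ k, ∑ l, r i k i k * r j l j l = scal r ^ 2 := (sum_comm_23 _).trans h₁
  have h₃ : ∑ i, ∑ j, ∑ k, ∑ l, r i l i l * r j k j k = scal r ^ 2 :=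
    ((sum_comm_34 _).trans (sum_comm_23 _)).trans h₁
  simp only [scalTerm, sum_add_distrib]
  rw [h₁, h₂, h₃]
  ring

lemma sum_normTerm : ∑ i, ∑ j, ∑ k, ∑ l, normTerm r i j k l = 3 * normSq r := by
  have h₂ : ∑ i, ∑ j, ∑ k, ∑ l, r i k j l ^ 2 = normSq r := sum_comm_23 _
  have h₃ : ∑ i, ∑ j, ∑ k, ∑ l, r i l j k ^ 2 = normSq r := (sum_comm_34 _).trans (sum_comm_23 _)
  simp only [normTerm, sum_add_distrib]
  rw [h₂, h₃, normSq]
  ring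

variable {r}

namespace IsCurvSymm

variable (hr : IsCurvSymm r)
include hr

lemma antisymm_right (i j k l : Fin n) : r i j l k = -r i j k l := by
  rw [hr.pair_symm, hr.antisymm, hr.pair_symm]

lemma apply_self_left (i k l : Fin n) : r i i k l = 0 := by
  linarith [hr.antisymm i i k l]

lemma apply_self_right (i j k : Fin n) : r i j k k = 0 := by
  linarith [hr.antisymm_right i j k k]

lemma sum_apply_swap (a b : Fin n) : ∑ m, r a m b m = ricci r a b :=
  sum_congr rfl fun m _ => by linarith [hr.antisymm a m b m, hr.antisymm_right m a b m]

lemma sum_apply_cross (a b : Fin n) : ∑ m, r a m m b = -ricci r a b := by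
  rw [ricci, ← sum_neg_distrib]
  exact sum_congr rfl fun m _ => by rw [hr.antisymm]

lemma gbTerm_eq_zero {i j k l : Fin n}
    (h : i = j ∨ i = k ∨ i = l ∨ j = k ∨ j = l ∨ k = l) : gbTerm r i j k l = 0 := by
  rcases h with rfl | rfl | rfl | rfl | rfl | rfl <;>
    grind [gbTerm, scalTerm, normTerm, ricciTerm, hr.antisymm, hr.pair_symm]

lemma sum_ricciTerm : ∑ i, ∑ j, ∑ k, ∑ l, ricciTerm r i j k l = 6 * ricciNormSq r := by
  have h₁ : ∑ i, ∑ j, ∑ k, ∑ l, r i j i k * r j l k l = ricciNormSq r :=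
    (sum_mul_sum_inner (fun i j k => r i j i k) fun j k l => r j l k l).trans <| by
      simp only [sum_apply_eq_ricci, hr.sum_apply_swap, ricciNormSq, sq]
  have h₂ : ∑ i, ∑ j, ∑ k, ∑ l, r i j i l * r j k k l = -ricciNormSq r := by
    rw [sum_comm_34]
    refine (sum_mul_sum_inner (fun i j l => r i j i l) fun j l k => r j k k l).trans ?_
    simp only [sum_apply_eq_ricci, hr.sum_apply_cross, ricciNormSq, sq, mul_neg, sum_neg_distrib]
  have h₃ : ∑ i, ∑ j, ∑ k, ∑ l, r i j j k * r i l k l = -ricciNormSq r := by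
    rw [sum_comm_12]
    refine (sum_mul_sum_inner (fun j i k => r i j j k) fun i k l => r i l k l).trans ?_
    simp only [hr.sum_apply_cross, hr.sum_apply_swap, ricciNormSq, sq, neg_mul, sum_neg_distrib]
  have h₄ : ∑ i, ∑ j, ∑ k, ∑ l, r i j j l * r i k k l = ricciNormSq r := by
    rw [sum_comm_12, sum_comm_34]
    refine (sum_mul_sum_inner (fun j i l => r i j j l) fun i l k => r i k k l).trans ?_
    simp only [hr.sum_apply_cross, ricciNormSq, sq, neg_mul_neg]
  have h₅ : ∑ i, ∑ j, ∑ k, ∑ l, r i k i l * r j k j l = ricciNormSq r := by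
    rw [sum_comm_23, sum_comm_34]
    exact (sum_mul_sum_inner (fun i k l => r i k i l) fun k l j => r j k j l).trans <| by
      simp only [sum_apply_eq_ricci, ricciNormSq, sq]
  have h₆ : ∑ i, ∑ j, ∑ k, ∑ l, r i k j k * r i l j l = ricciNormSq r := by
    rw [sum_comm_23, sum_comm_12]
    exact (sum_mul_sum_inner (fun k i j => r i k j k) fun i j l => r i l j l).trans <| by
      simp only [hr.sum_apply_swap, ricciNormSq, sq]
  simp only [ricciTerm, sum_add_distrib, sum_sub_distrib]
  rw [h₁, h₂, h₃, h₄, h₅, h₆]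
  ring

lemma sum_gbTerm :
    ∑ i, ∑ j, ∑ k, ∑ l, gbTerm r i j k l
      = 6 * scal r ^ 2 + 6 * normSq r - 24 * ricciNormSq r := by
  simp only [gbTerm, sum_add_distrib, sum_sub_distrib, ← mul_sum]
  rw [sum_scalTerm, sum_normTerm, hr.sum_ricciTerm]
  ring

end IsCurvSymm

end Components

namespace DF

open Components

variable {n : ℕ}

structure HasComponents (Rd : DF n) (r : Fin n → Fin n → Fin n → Fin n → ℝ) : Prop where
  isDeg : IsDeg 2 Rd
  apply_pair : ∀ {i j k l : Fin n}, i ≠ j → k ≠ l →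
    Rd {i, j} {k, l} = ltSign i j * ltSign k l * r i j k l

namespace HasComponents

variable {Rd : DF n} {r : Fin n → Fin n → Fin n → Fin n → ℝ} (hRd : HasComponents Rd r)
include hRd

lemma mul_self_apply_four (hpair : ∀ i j k l, r k l i j = r i j k l) {i j k l : Fin n}
    (hij : i ≠ j) (hik : i ≠ k) (hil : i ≠ l) (hjk : j ≠ k) (hjl : j ≠ l) (hkl : k ≠ l) :
    mul Rd Rd {i, j, k, l} {i, j, k, l} = gbTerm r i j k l := by
  have hi : i ∉ ({j, k, l} : Finset (Fin n)) := by simp [hij, hik, hil]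
  have hj : j ∉ ({k, l} : Finset (Fin n)) := by simp [hjk, hjl]
  have hk : k ∉ ({l} : Finset (Fin n)) := by simp [hkl]
  have hl : ({l} : Finset (Fin n)).powerset = {∅, {l}} := by ext; simp [subset_singleton_iff]
  have hsdiff : ({i, j, k, l} : Finset (Fin n)) \ {i, j} = {k, l} ∧
      ({i, j, k, l} : Finset (Fin n)) \ {i, k} = {j, l} ∧
      ({i, j, k, l} : Finset (Fin n)) \ {i, l} = {j, k} ∧
      ({i, j, k, l} : Finset (Fin n)) \ {j, k} = {i, l} ∧
      ({i, j, k, l} : Finset (Fin n)) \ {j, l} = {i, k} ∧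
      ({i, j, k, l} : Finset (Fin n)) \ {k, l} = {i, j} := by
    refine ⟨?_, ?_, ?_, ?_, ?_, ?_⟩ <;>
      (ext x; simp only [mem_sdiff, mem_insert, mem_singleton]; grind)
  obtain ⟨h₁, h₂, h₃, h₄, h₅, h₆⟩ := hsdiff
  have := hij.symm; have := hik.symm; have := hil.symm; have := hjk.symm; have := hjl.symm
  have := hkl.symm
  unfold mul
  simp only [sum_powerset_insert hi, sum_powerset_insert hj, sum_powerset_insert hk, hl,
    sum_pair (singleton_ne_empty l).symm, insert_empty]
  -- only the splittings into two pairs survive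
  simp (disch := simp [*, card_insert_of_notMem])
    only [hRd.isDeg.apply_eq_zero_of_card_left, hRd.isDeg.apply_eq_zero_of_card_right,
      mul_zero, zero_mul, add_zero, zero_add, h₁, h₂, h₃, h₄, h₅, h₆]
  simp (disch := assumption) only [hRd.apply_pair, shuffleSign_pair]
  simp only [ltSign_swap hij, ltSign_swap hik, ltSign_swap hil, ltSign_swap hjk, ltSign_swap hjl,
    ltSign_swap hkl, gbTerm, scalTerm, normTerm, ricciTerm, hpair]
  ring_nf
  simp only [ltSign_sq, _root_.one_mul, mul_one]

lemma contr_apply_singleton (hr : IsCurvSymm r) (i j : Fin n) : contr Rd {i} {j} = ricci r i j := by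
  refine sum_congr rfl fun m _ => ?_
  by_cases hm : m = i ∨ m = j
  · rw [if_pos (by simpa using hm)]
    rcases hm with rfl | rfl
    · exact (hr.apply_self_left _ _ _).symm
    · exact (hr.apply_self_right _ _ _).symm
  · rw [not_or] at hm
    rw [if_neg (by simpa using hm), hRd.apply_pair hm.1 hm.2, shuffleSign_singleton hm.1,
      shuffleSign_singleton hm.2]
    linear_combination (ltSign m j * ltSign m j * r m i m j) * ltSign_mul_self m i
      + r m i m j * ltSign_mul_self m j

lemma toScalar_contrN_two (hr : IsCurvSymm r) : toScalar (contrN 2 Rd) = scal r :=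
  contr_self_eq_sum (contr Rd) ∅ (fun a => ricci r a a) (by simp) fun a _ => by
    rw [insert_empty]; exact hRd.contr_apply_singleton hr a a

lemma dinner_contrN_one (hr : IsCurvSymm r) :
    dinner (contrN 1 Rd) (contrN 1 Rd) = ricciNormSq r := by
  have hdeg : IsDeg 1 (contr Rd) := hRd.isDeg.contr
  change ∑ S, ∑ T, contr Rd S T * contr Rd S T = _
  rw [sum_eq_sum_singleton _ fun S hS => sum_eq_zero fun T _ => by
    rw [hdeg.apply_eq_zero_of_card_left hS, zero_mul]]
  refine sum_congr rfl fun i _ => ?_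
  rw [sum_eq_sum_singleton _ fun T hT => by rw [hdeg.apply_eq_zero_of_card_right _ hT, zero_mul]]
  simp only [hRd.contr_apply_singleton hr, sq]

lemma four_mul_dinner_self (hr : IsCurvSymm r) : 4 * dinner Rd Rd = normSq r := by
  have hrow (S : Finset (Fin n)) : 2 * ∑ T, Rd S T * Rd S T =
      ∑ k, ∑ l, if k = l then 0 else Rd S {k, l} * Rd S {k, l} :=
    two_mul_sum_eq_sum_pair _ fun T hT => by
      rw [hRd.isDeg.apply_eq_zero_of_card_right S hT, mul_zero]
  have hentry (i j k l : Fin n) :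
      (if k = l then 0 else Rd {i, j} {k, l} * Rd {i, j} {k, l}) = r i j k l ^ 2 := by
    by_cases hkl : k = l
    · rw [if_pos hkl, hkl, hr.apply_self_right, sq, mul_zero]
    by_cases hij : i = j
    · rw [if_neg hkl, hij, hRd.isDeg.apply_eq_zero_of_card_left (by simp), hr.apply_self_left,
        sq, mul_zero]
    · rw [if_neg hkl, hRd.apply_pair hij hkl]
      linear_combination (ltSign k l * ltSign k l * r i j k l ^ 2) * ltSign_mul_self i j
        + r i j k l ^ 2 * ltSign_mul_self k l
  calc 4 * dinner Rd Rd = 2 * ∑ S, 2 * ∑ T, Rd S T * Rd S T := by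
        rw [dinner, ← mul_sum]; ring
    _ = 2 * ∑ S, ∑ k, ∑ l, if k = l then 0 else Rd S {k, l} * Rd S {k, l} := by
        simp only [hrow]
    _ = ∑ i, ∑ j, if i = j then 0 else
          ∑ k, ∑ l, if k = l then 0 else Rd {i, j} {k, l} * Rd {i, j} {k, l} :=
        two_mul_sum_eq_sum_pair _ fun S hS => sum_eq_zero fun k _ => sum_eq_zero fun l _ => by
          rw [hRd.isDeg.apply_eq_zero_of_card_left hS, zero_mul, ite_self]
    _ = normSq r := sum_congr rfl fun i _ => sum_congr rfl fun j _ => by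
        split_ifs with hij
        · simp [hij, hr.apply_self_left]
        · simp only [hentry]

lemma toScalar_contrN_four_mul_self (hr : IsCurvSymm r) :
    toScalar (contrN 4 (mul Rd Rd)) = ∑ l, ∑ k, ∑ j, ∑ i, gbTerm r i j k l := by
  have c₁ {j k l : Fin n} (hjk : j ≠ k) (hjl : j ≠ l) (hkl : k ≠ l) :
      contr (mul Rd Rd) {j, k, l} {j, k, l} = ∑ i, gbTerm r i j k l :=
    contr_self_eq_sum _ _ _ (fun i hi => hr.gbTerm_eq_zero (by simp at hi; tauto)) fun i hi => by
      simp only [mem_insert, mem_singleton, not_or] at hi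
      exact hRd.mul_self_apply_four hr.pair_symm hi.1 hi.2.1 hi.2.2 hjk hjl hkl
  have c₂ {k l : Fin n} (hkl : k ≠ l) :
      contr (contr (mul Rd Rd)) {k, l} {k, l} = ∑ j, ∑ i, gbTerm r i j k l :=
    contr_self_eq_sum _ _ _
      (fun j hj => sum_eq_zero fun i _ => hr.gbTerm_eq_zero (by simp at hj; tauto)) fun j hj => by
        simp only [mem_insert, mem_singleton, not_or] at hj
        exact c₁ hj.1 hj.2 hkl
  have c₃ (l : Fin n) :
      contr (contr (contr (mul Rd Rd))) {l} {l} = ∑ k, ∑ j, ∑ i, gbTerm r i j k l :=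
    contr_self_eq_sum _ _ _
      (fun k hk => sum_eq_zero fun j _ => sum_eq_zero fun i _ =>
        hr.gbTerm_eq_zero (by simp at hk; tauto)) fun k hk => c₂ (by simpa using hk)
  exact contr_self_eq_sum _ ∅ _ (by simp) fun l _ => by rw [insert_empty]; exact c₃ l

end HasComponents

end DF

section Geometry

open Components

variable {n : ℕ} {V : Type*} [NormedAddCommGroup V] [InnerProductSpace ℝ V]
  (e : OrthonormalBasis (Fin n) ℝ V) {R : V → V → V → V → ℝ}

noncomputable def curvComponents (R : V → V → V → V → ℝ) (i j k l : Fin n) : ℝ :=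
  R (e i) (e j) (e k) (e l)

lemma IsCurv.isCurvSymm_curvComponents (hR : IsCurv R) : IsCurvSymm (curvComponents e R) :=
  ⟨fun _ _ _ _ => hR.antisymm _ _ _ _, fun _ _ _ _ => hR.pair_symm _ _ _ _⟩

lemma orderIsoOfFin_pair {i j : Fin n} (hij : i < j) (h : ({i, j} : Finset (Fin n)).card = 2)
    (m : Fin 2) : (({i, j} : Finset (Fin n)).orderIsoOfFin h m : Fin n) = ![i, j] m := by
  have hmono : StrictMono ![i, j] := by
    intro a b hab
    fin_cases a <;> fin_cases b <;> simp_all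
  rw [coe_orderIsoOfFin_apply, ← orderEmbOfFin_unique h (by intro x; fin_cases x <;> simp) hmono]

lemma ofCurv_pair_of_lt (R : V → V → V → V → ℝ) {i j k l : Fin n} (hij : i < j) (hkl : k < l) :
    ofCurv e R {i, j} {k, l} = curvComponents e R i j k l := by
  rw [ofCurv, ofForm, dif_pos ⟨card_pair hij.ne, card_pair hkl.ne⟩]
  simp only [orderIsoOfFin_pair hij, orderIsoOfFin_pair hkl]
  rfl

lemma IsCurv.hasComponents_ofCurv (hR : IsCurv R) :
    DF.HasComponents (ofCurv e R) (curvComponents e R) := by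
  have hr := hR.isCurvSymm_curvComponents e
  refine ⟨fun S T h => by_contra fun hc => h (dif_neg hc), fun {i j k l} hij hkl => ?_⟩
  rcases hij.lt_or_gt with hij | hij <;> rcases hkl.lt_or_gt with hkl | hkl
  · rw [ofCurv_pair_of_lt e R hij hkl, DF.ltSign_of_lt hij, DF.ltSign_of_lt hkl]
    ring
  · rw [pair_comm k l, ofCurv_pair_of_lt e R hij hkl, DF.ltSign_of_lt hij,
      DF.ltSign_swap hkl.ne, DF.ltSign_of_lt hkl, hr.antisymm_right]
    ring
  · rw [pair_comm i j, ofCurv_pair_of_lt e R hij hkl, DF.ltSign_swap hij.ne, DF.ltSign_of_lt hij,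
      DF.ltSign_of_lt hkl, hr.antisymm]
    ring
  · rw [pair_comm i j, pair_comm k l, ofCurv_pair_of_lt e R hij hkl, DF.ltSign_swap hij.ne,
      DF.ltSign_of_lt hij, DF.ltSign_swap hkl.ne, DF.ltSign_of_lt hkl, hr.antisymm,
      hr.antisymm_right]
    ring

end Geometry

theorem stmt5_avez_formula_general
    (n : ℕ)
    (V : Type*) [NormedAddCommGroup V] [InnerProductSpace ℝ V]
    (e : OrthonormalBasis (Fin n) ℝ V)
    (R : V → V → V → V → ℝ) (hR : IsCurv R) :
    DF.toScalar (DF.contrN 4 (DF.pow (ofCurv e R) 2)) / (Nat.factorial 4 : ℝ) =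
      DF.dinner (ofCurv e R) (ofCurv e R)
      - DF.dinner (DF.contrN 1 (ofCurv e R)) (DF.contrN 1 (ofCurv e R))
      + (1 / 4) * (DF.toScalar (DF.contrN 2 (ofCurv e R))) ^ 2 := by
  have hr := hR.isCurvSymm_curvComponents e
  have hRd := hR.hasComponents_ofCurv e
  rw [DF.pow_two, hRd.toScalar_contrN_four_mul_self hr, sum_rev4, hr.sum_gbTerm,
    hRd.dinner_contrN_one hr, hRd.toScalar_contrN_two hr, ← hRd.four_mul_dinner_self hr]
  norm_num [Nat.factorial]
  ring

/-- **Avez's formula.** For an algebraic curvature tensor `R` on an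
`n`-dimensional real inner product space with `n ≥ 4`,
`h₄ = c⁴R²/4! = |R|² − |cR|² + (1/4)·(c²R)²`. -/
theorem stmt5_avez_formula
    (n : ℕ) (hn : 4 ≤ n)
    (V : Type*) [NormedAddCommGroup V] [InnerProductSpace ℝ V]
    (hV : Module.finrank ℝ V = n)
    (e : OrthonormalBasis (Fin n) ℝ V)
    (R : V → V → V → V → ℝ) (hR : IsCurv R) :
    DF.toScalar (DF.contrN 4 (DF.pow (ofCurv e R) 2)) / (Nat.factorial 4 : ℝ) =
      DF.dinner (ofCurv e R) (ofCurv e R)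
      - DF.dinner (DF.contrN 1 (ofCurv e R)) (DF.contrN 1 (ofCurv e R))
      + (1 / 4) * (DF.toScalar (DF.contrN 2 (ofCurv e R))) ^ 2 :=
  stmt5_avez_formula_general n V e R hR
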